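/- Let Q ∈ R^{n×n}, R ∈ R^{n×m}, S ∈ R^{m×n}, and let M be the (n+m)×(n+m) block matrix M = [[Q, R],[S, 0]]. Define the sequence of n×n matrices Q_0 = I, Q_1 = Q, and Q_k = Q·Q_{k-1} + R·S·Q_{k-2} for k ≥ 2. Then for every k ≥ 2, M^k equals the block matrix [[Q_k, Q_{k-1}·R],[S·Q_{k-1}, S·Q_{k-2}·R]]. -/

import Mathlib

/-! Left multiplication by `[[Q, R], [S, 0]]` maps a block matrix of the shape
`[[C, A·R], [S·A, S·B·R]]` to one of the same shape, with `(C, A, B)` replaced by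
`(Q·C + R·S·A, C, A)`: one step of the recursion defining `Qseq`. -/

open Matrix

def Qseq {n m : ℕ} (Q : Matrix (Fin n) (Fin n) ℝ) (R : Matrix (Fin n) (Fin m) ℝ)
    (S : Matrix (Fin m) (Fin n) ℝ) : ℕ → Matrix (Fin n) (Fin n) ℝ
  | 0 => 1
  | 1 => Q
  | (k + 2) => Q * Qseq Q R S (k + 1) + R * S * Qseq Q R S k

namespace Matrix

variable {l o α : Type*} [Fintype l] [Fintype o] [Semiring α]

theorem fromBlocks_zero₂₂_mul_fromBlocks (Q : Matrix l l α) (R : Matrix l o α)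
    (S : Matrix o l α) (A B C : Matrix l l α) :
    fromBlocks Q R S 0 * fromBlocks C (A * R) (S * A) (S * B * R) =
      fromBlocks (Q * C + R * S * A) ((Q * A + R * S * B) * R) (S * C) (S * A * R) := by
  simp only [fromBlocks_multiply, Matrix.zero_mul, add_zero, Matrix.add_mul, Matrix.mul_assoc]

theorem fromBlocks_zero₂₂_sq [DecidableEq l] [DecidableEq o] (Q : Matrix l l α)
    (R : Matrix l o α) (S : Matrix o l α) :
    fromBlocks Q R S 0 ^ 2 = fromBlocks (Q * Q + R * S) (Q * R) (S * Q) (S * R) := by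
  simp only [sq, fromBlocks_multiply, Matrix.mul_zero, Matrix.zero_mul, add_zero]

end Matrix

section Qseq

variable {n m : ℕ} (Q : Matrix (Fin n) (Fin n) ℝ) (R : Matrix (Fin n) (Fin m) ℝ)
  (S : Matrix (Fin m) (Fin n) ℝ)

theorem fromBlocks_zero₂₂_pow_add_two (j : ℕ) :
    fromBlocks Q R S 0 ^ (j + 2) =
      fromBlocks (Qseq Q R S (j + 2)) (Qseq Q R S (j + 1) * R)
        (S * Qseq Q R S (j + 1)) (S * Qseq Q R S j * R) := by
  induction j with
  | zero => simp only [zero_add, fromBlocks_zero₂₂_sq, Qseq, Matrix.mul_one]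
  | succ j ih =>
    rw [pow_succ', ih, fromBlocks_zero₂₂_mul_fromBlocks]
    rfl

end Qseq

/-- For the block matrix `M = [[Q, R], [S, 0]]`, for every `k ≥ 2`,
`M^k = [[Q_k, Q_{k-1}·R], [S·Q_{k-1}, S·Q_{k-2}·R]]`. -/
theorem block_matrix_power (n m : ℕ)
    (Q : Matrix (Fin n) (Fin n) ℝ) (R : Matrix (Fin n) (Fin m) ℝ)
    (S : Matrix (Fin m) (Fin n) ℝ) :
    ∀ k : ℕ, 2 ≤ k →
      (Matrix.fromBlocks Q R S (0 : Matrix (Fin m) (Fin m) ℝ)) ^ k =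
        Matrix.fromBlocks (Qseq Q R S k) (Qseq Q R S (k - 1) * R)
          (S * Qseq Q R S (k - 1)) (S * Qseq Q R S (k - 2) * R) := by
  intro k hk
  obtain ⟨j, rfl⟩ := Nat.exists_eq_add_of_le' hk
  exact fromBlocks_zero₂₂_pow_add_two Q R S j
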